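/- In W_q = Λ(y_1, …, y_q) ⊗ ℚ[c_1, …, c_q]_{2q} with q = 2k, the element y_2 ∧ c_2^k is a cocycle of degree 4k + 3 = 2q + 3, and it is not a coboundary. -/

import Mathlib

/-! A concrete model of the truncated Weil algebra
`W_q = Λ(y_1, …, y_q) ⊗ ℚ[c_1, …, c_q]_{2q}` (deg `y_i = 2i−1`, deg `c_i = 2i`,
polynomial part truncated in degrees `> 2q`): it has a ℚ-basis of monomials
`y_I c_J` indexed by `(I, J)` with `I ⊆ {1,…,q}` a subset and `J` a multi-exponent
with `deg c_J = 2·cdeg J ≤ 2q`.  The index `i : Fin q` stands for `i.val + 1`. -/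

/-- Index of a monomial `y_I ⊗ c_J`. -/
abbrev WIdx (q : ℕ) := Finset (Fin q) × (Fin q →₀ ℕ)

/-- Half the degree of `c_J = ∏ c_i^{J i}` : `cdeg J = Σ i·J_i` (so `deg c_J = 2 cdeg J`). -/
def cdeg {q : ℕ} (J : Fin q →₀ ℕ) : ℕ := J.sum fun i m => (i.val + 1) * m

/-- The underlying ℚ-vector space of `W_q`: free on the monomials `y_I c_J` with
`deg c_J ≤ 2q`. -/
abbrev Wq (q : ℕ) : Type := {p : WIdx q // cdeg p.2 ≤ q} →₀ ℚ

/-- Value of the differential on a basis monomial `y_I c_J`: by the graded Leibniz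
rule and `d y_i = c_i`, `d c_i = 0`, it is `Σ_{r ∈ I} ± y_{I∖{r}} c_J c_r`, where a
term is truncated to `0` when `deg (c_J c_r) > 2q`, and the sign is `(−1)` to the
number of `y`-generators preceding `y_r` in `y_I`. -/
noncomputable def dMon {q : ℕ} (p : {p : WIdx q // cdeg p.2 ≤ q}) : Wq q :=
  ∑ r ∈ p.1.1, if h : cdeg (p.1.2 + Finsupp.single r 1) ≤ q then
      ((-1 : ℚ) ^ ((p.1.1.filter (· < r)).card)) •
        Finsupp.single ⟨(p.1.1.erase r, p.1.2 + Finsupp.single r 1), h⟩ (1 : ℚ)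
    else 0

/-- The differential of `W_q`, extended ℚ-linearly from the monomial basis. -/
noncomputable def dW (q : ℕ) : Wq q →ₗ[ℚ] Wq q :=
  Finsupp.lsum ℚ fun p => LinearMap.toSpanSingleton ℚ (Wq q) (dMon p)

/-- Total degree of the monomial `y_I c_J`: `Σ_{i∈I} (2i−1) + 2 cdeg J`. -/
def tdeg {q : ℕ} (p : WIdx q) : ℕ :=
  (∑ i ∈ p.1, (2 * (i.val + 1) - 1)) + 2 * cdeg p.2

/-!
`d` raises the polynomial degree: every term of `d (y_I c_J)` is a monomial `y_{I∖r} c_J c_r`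
with `r ∉ I∖r` but `r ∈ supp (J + r)`. So no monomial `y_I c_J` with `supp J ⊆ I` occurs in any
coboundary, and `y_2 c_2^k` is such a monomial. It is a cocycle because `c_2^k` already has the
top degree `2q`, so `d` multiplies it into the truncated part.
-/

section

variable {q : ℕ}

theorem cdeg_single (i : Fin q) (m : ℕ) : cdeg (Finsupp.single i m) = (i.val + 1) * m := by
  simp [cdeg]

theorem cdeg_add (J J' : Fin q →₀ ℕ) : cdeg (J + J') = cdeg J + cdeg J' :=
  Finsupp.sum_add_index' (by simp) (fun _ _ _ => mul_add _ _ _)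

theorem dW_single (p : {p : WIdx q // cdeg p.2 ≤ q}) : dW q (Finsupp.single p 1) = dMon p := by
  rw [dW, Finsupp.lsum_single, LinearMap.toSpanSingleton_apply, one_smul]

theorem dMon_eq_zero_of_cdeg_eq {p : {p : WIdx q // cdeg p.2 ≤ q}} (hp : cdeg p.1.2 = q) :
    dMon p = 0 := by
  refine Finset.sum_eq_zero fun r _ => dif_neg ?_
  rw [cdeg_add, cdeg_single, hp]
  omega

theorem dMon_apply_eq_zero_of_support_subset {e : {p : WIdx q // cdeg p.2 ≤ q}}
    (he : e.1.2.support ⊆ e.1.1) (p : {p : WIdx q // cdeg p.2 ≤ q}) : dMon p e = 0 := by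
  rw [dMon, Finsupp.finsetSum_apply]
  refine Finset.sum_eq_zero fun r _ => ?_
  split_ifs
  · rw [Finsupp.smul_apply, Finsupp.single_apply, if_neg, smul_zero]
    intro hpe
    have hI : e.1.1 = p.1.1.erase r := by rw [← hpe]
    have hJ : e.1.2 = p.1.2 + Finsupp.single r 1 := by rw [← hpe]
    have hr : r ∈ e.1.2.support := by simp [hJ]
    exact Finset.notMem_erase r p.1.1 (hI ▸ he hr)
  · rfl

theorem dW_apply_eq_zero_of_support_subset {e : {p : WIdx q // cdeg p.2 ≤ q}}
    (he : e.1.2.support ⊆ e.1.1) (w : Wq q) : dW q w e = 0 := by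
  rw [dW, Finsupp.lsum_apply, Finsupp.sum_apply]
  exact Finset.sum_eq_zero fun p _ => by
    simp only [LinearMap.toSpanSingleton_apply, Finsupp.smul_apply,
      dMon_apply_eq_zero_of_support_subset he, smul_zero]

theorem not_exists_dW_eq_single_of_support_subset {e : {p : WIdx q // cdeg p.2 ≤ q}}
    (he : e.1.2.support ⊆ e.1.1) : ¬ ∃ w : Wq q, dW q w = Finsupp.single e 1 := by
  rintro ⟨w, hw⟩
  have h := dW_apply_eq_zero_of_support_subset he w
  rw [hw, Finsupp.single_eq_same] at h
  exact one_ne_zero h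

end

theorem y2c2k_cocycle_not_coboundary_general (k : ℕ) (q : ℕ) (hq : q = 2 * k)
    (i2 : Fin q) (hi2 : i2.val = 1)
    (e : {p : WIdx q // cdeg p.2 ≤ q}) (he : e.1 = ({i2}, Finsupp.single i2 k)) :
    tdeg e.1 = 2 * q + 3 ∧ dW q (Finsupp.single e 1) = 0 ∧
      ¬ ∃ w : Wq q, dW q w = Finsupp.single e 1 := by
  have hcdeg : cdeg e.1.2 = q := by rw [he, cdeg_single, hi2, hq]
  refine ⟨?_, ?_, ?_⟩
  · rw [tdeg, hcdeg, he, Finset.sum_singleton, hi2]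
    omega
  · rw [dW_single, dMon_eq_zero_of_cdeg_eq hcdeg]
  · refine not_exists_dW_eq_single_of_support_subset ?_
    rw [he]
    exact Finsupp.support_single_subset

/-- In `W_q` with `q = 2k`, the monomial `y_2 ∧ c_2^k` (given by `I = {y_2}` and
`J = ` the exponent of `c_2^k`, where `i2 : Fin q` with `i2.val = 1` indexes the
generators `y_2, c_2`) is a cocycle of degree `4k + 3 = 2q + 3` and is not a
coboundary. -/
theorem y2c2k_cocycle_not_coboundary (k : ℕ) (hk : 1 ≤ k) (q : ℕ) (hq : q = 2 * k)
    (i2 : Fin q) (hi2 : i2.val = 1)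
    (e : {p : WIdx q // cdeg p.2 ≤ q}) (he : e.1 = ({i2}, Finsupp.single i2 k)) :
    tdeg e.1 = 2 * q + 3 ∧ dW q (Finsupp.single e 1) = 0 ∧
      ¬ ∃ w : Wq q, dW q w = Finsupp.single e 1 :=
  y2c2k_cocycle_not_coboundary_general k q hq i2 hi2 e he
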